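/- For every integer n ≥ 0, every integer k, and every real x: E_{n,p,q}^{(k)}(x) = Σ_{l=0}^{n} Σ_{i=l}^{n} binom(n,i) · S_2(i,l) · E_{n−i,p,q}^{(k)} · (x)_l, where (x)_l = x(x−1)⋯(x−l+1) is the falling factorial with (x)_0 = 1 and E_{n−i,p,q}^{(k)} = E_{n−i,p,q}^{(k)}(0) are the (p,q)-poly-Euler numbers. -/

import Mathlib

open Finset

/-- The `(p,q)`-integer `[m]_{p,q} = (p^m - q^m)/(p - q)`. -/
noncomputable def pqInt (p q : ℝ) (m : ℕ) : ℝ := (p ^ m - q ^ m) / (p - q)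

/-- The exponential generating function `∑ f n * t^n / n!` of a sequence `f`. -/
noncomputable def egf (f : ℕ → ℝ) : PowerSeries ℝ :=
  PowerSeries.mk fun n => f n / n.factorial

/-- Formal substitution of a power series `S` with zero constant term into the
`(p,q)`-polylogarithm `Li_{k,p,q}(s) = ∑_{m ≥ 1} s^m / [m]_{p,q}^k`.
(For `m > n` the series `S^m` has zero `n`-th coefficient, so the sum is finite.) -/
noncomputable def pqLi (p q : ℝ) (k : ℤ) (S : PowerSeries ℝ) : PowerSeries ℝ :=
  PowerSeries.mk fun n =>
    ∑ m ∈ Finset.Icc 1 n, PowerSeries.coeff (R := ℝ) n (S ^ m) / pqInt p q m ^ k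

/-- Stirling numbers of the second kind: the number of partitions of an
`n`-element set into `m` nonempty blocks. -/
def stirling2 : ℕ → ℕ → ℕ
  | 0, 0 => 1
  | 0, _ + 1 => 0
  | _ + 1, 0 => 0
  | n + 1, m + 1 => (m + 1) * stirling2 n (m + 1) + stirling2 n m

/-!
Setting `x = 0` in the generating function identity shows that `2 Li_{k,p,q}(1 - e^{-t})/(1 + e^t)`
is the generating function of the numbers `E_{n,p,q}^{(k)}`, so that of `E_{n,p,q}^{(k)}(x)` is
its product with `e^{xt}`: `E_{n,p,q}^{(k)}(x) = ∑ᵢ (n choose i) xⁱ E_{n-i,p,q}^{(k)}`. Expanding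
`xⁱ = ∑ₗ S₂(i,l) (x)ₗ` and exchanging the two sums gives the formula.
-/

open PowerSeries

theorem stirling2_eq_stirlingSecond : ∀ n k : ℕ, stirling2 n k = Nat.stirlingSecond n k
  | 0, 0 => rfl
  | 0, _ + 1 => rfl
  | _ + 1, 0 => rfl
  | n + 1, k + 1 => by
    rw [stirling2, Nat.stirlingSecond_succ_succ, stirling2_eq_stirlingSecond n (k + 1),
      stirling2_eq_stirlingSecond n k]

theorem pow_eq_sum_stirlingSecond_mul_descPochhammer_eval {R : Type*} [CommRing R] (r : R)
    (n : ℕ) :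
    r ^ n = ∑ k ∈ range (n + 1), (Nat.stirlingSecond n k : R) * (descPochhammer R k).eval r := by
  induction n with
  | zero => simp
  | succ n ih =>
    set P : ℕ → R := fun k => (descPochhammer R k).eval r
    have hP : ∀ k, r * P k = P (k + 1) + k * P k := fun k => by
      simp only [P, descPochhammer_succ_eval]; ring
    -- reindexing `k ↦ k + 1` loses nothing: the `k = 0` and `k = n + 1` terms vanish
    have hshift : ∑ k ∈ range (n + 1), (Nat.stirlingSecond n k : R) * (k * P k) =
        ∑ k ∈ range (n + 1), (Nat.stirlingSecond n (k + 1) : R) * ((k + 1 : ℕ) * P (k + 1)) :=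
      calc _ = ∑ k ∈ range (n + 2), (Nat.stirlingSecond n k : R) * (k * P k) := by
            rw [sum_range_succ _ (n + 1), Nat.stirlingSecond_eq_zero_of_lt n.lt_succ_self]; simp
        _ = _ := by rw [sum_range_succ']; simp
    calc r ^ (n + 1) = ∑ k ∈ range (n + 1), (Nat.stirlingSecond n k : R) * (r * P k) := by
          rw [pow_succ', ih, mul_sum]; exact sum_congr rfl fun k _ => by ring
      _ = ∑ k ∈ range (n + 1), (Nat.stirlingSecond (n + 1) (k + 1) : R) * P (k + 1) := by
          simp only [hP, mul_add, sum_add_distrib]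
          rw [hshift, ← sum_add_distrib]
          refine sum_congr rfl fun k _ => ?_
          rw [Nat.stirlingSecond_succ_succ]; push_cast; ring
      _ = ∑ k ∈ range (n + 2), (Nat.stirlingSecond (n + 1) k : R) * P k := by
          rw [sum_range_succ' _ (n + 1)]; simp

theorem coeff_egf (f : ℕ → ℝ) (n : ℕ) : coeff n (egf f) = f n / n.factorial :=
  coeff_mk _ _

theorem egf_injective : Function.Injective egf := fun f g h => funext fun n => by
  simpa [coeff_egf, Nat.factorial_ne_zero] using congrArg (coeff n) h

theorem rescale_exp_eq_egf_pow (x : ℝ) : rescale x (exp ℝ) = egf (x ^ ·) := by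
  ext n
  simp [coeff_egf, coeff_rescale, coeff_exp, div_eq_mul_inv]

theorem egf_mul (f g : ℕ → ℝ) :
    egf f * egf g = egf fun n => ∑ i ∈ range (n + 1), (n.choose i : ℝ) * f i * g (n - i) := by
  ext n
  rw [coeff_mul,
    Nat.sum_antidiagonal_eq_sum_range_succ (fun i j => coeff i (egf f) * coeff j (egf g)),
    coeff_egf, sum_div]
  refine sum_congr rfl fun i hi => ?_
  rw [coeff_egf, coeff_egf, Nat.cast_choose ℝ (Nat.lt_succ_iff.mp (mem_range.mp hi))]
  field_simp

theorem eq_sum_choose_mul_pow_mul_of_mul_rescale_exp {A B : ℝ⟦X⟧} (hB : B ≠ 0) {E : ℝ → ℕ → ℝ}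
    (hE : ∀ x, A * rescale x (exp ℝ) = B * egf (E x)) (x : ℝ) (n : ℕ) :
    E x n = ∑ i ∈ range (n + 1), (n.choose i : ℝ) * x ^ i * E 0 (n - i) := by
  have hA : A = B * egf (E 0) := by simpa [rescale_zero, constantCoeff_exp] using hE 0
  have hEx : egf (E x) = egf (x ^ ·) * egf (E 0) := by
    refine mul_left_cancel₀ hB ?_
    rw [← hE, hA, rescale_exp_eq_egf_pow]; ring
  rw [egf_mul] at hEx
  exact congrFun (egf_injective hEx) n

theorem one_add_exp_ne_zero (A : Type*) [Ring A] [Algebra ℚ A] [CharZero A] :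
    (1 + exp A) ≠ 0 := fun h => by
  simpa [constantCoeff_exp, one_add_one_eq_two] using congrArg constantCoeff h

theorem pqPolyEuler_eq_sum_stirling2_fallingFactorial_general
    (p q : ℝ) (k : ℤ)
    (E : ℝ → ℕ → ℝ)
    (hE : ∀ x : ℝ,
      2 * pqLi p q k (1 - PowerSeries.rescale (-1) (PowerSeries.exp ℝ)) *
          PowerSeries.rescale x (PowerSeries.exp ℝ) =
        (1 + PowerSeries.exp ℝ) * egf (E x)) :
    ∀ (n : ℕ) (x : ℝ),
      E x n =
        ∑ l ∈ Finset.range (n + 1), ∑ i ∈ Finset.Icc l n,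
          (n.choose i : ℝ) * (stirling2 i l : ℝ) * E 0 (n - i) *
            ∏ j ∈ Finset.range l, (x - (j : ℝ)) := by
  intro n x
  rw [eq_sum_choose_mul_pow_mul_of_mul_rescale_exp (one_add_exp_ne_zero ℝ) hE]
  simp only [pow_eq_sum_stirlingSecond_mul_descPochhammer_eval, descPochhammer_eval_eq_prod_range,
    stirling2_eq_stirlingSecond, mul_sum, sum_mul]
  rw [sum_comm' (t' := range (n + 1)) (s' := fun l => Icc l n) fun i l => by
    simp only [mem_range, mem_Icc]; omega]
  exact sum_congr rfl fun i _ => sum_congr rfl fun l _ => by ring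

theorem pqPolyEuler_eq_sum_stirling2_fallingFactorial
    (p q : ℝ) (hq : 0 < q) (hqp : q < p) (hp : p ≤ 1) (k : ℤ)
    (E : ℝ → ℕ → ℝ)
    (hE : ∀ x : ℝ,
      2 * pqLi p q k (1 - PowerSeries.rescale (-1) (PowerSeries.exp ℝ)) *
          PowerSeries.rescale x (PowerSeries.exp ℝ) =
        (1 + PowerSeries.exp ℝ) * egf (E x)) :
    ∀ (n : ℕ) (x : ℝ),
      E x n =
        ∑ l ∈ Finset.range (n + 1), ∑ i ∈ Finset.Icc l n,
          (n.choose i : ℝ) * (stirling2 i l : ℝ) * E 0 (n - i) *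
            ∏ j ∈ Finset.range l, (x - (j : ℝ)) :=
  pqPolyEuler_eq_sum_stirling2_fallingFactorial_general p q k E hE
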